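/- Define on pairs of formal power series the bilinear product u ↶ v by the inductive rules: ∅ e_i ↶ ζ e_j = 0; (x0 η) e_i ↶ ζ e_j = x0(η e_i ↶ ζ e_j); (x1 η) e_i ↶ ζ e_1 = x1(η e_i ↶ ζ e_1) + x1(η ⧢ ζ) e_i; (x1 η) e_i ↶ ζ e_2 = x1(η e_i ↶ ζ e_2) + x0(η ⧢ ζ) e_i. Together with the Lie bracket [(u1,u2),(v1,v2)] = (0, u1 ⧢ v2 − v1 ⧢ u2), the triple (g, [−,−], ↶) is a (right) post-Lie algebra: [x, y] ↶ z = [x ↶ z, y] + [x, y ↶ z] and z ↶ [x, y] = a_↶(z, x, y) − a_↶(z, y, x), where a_↶(x,y,z) = (x ↶ y) ↶ z − x ↶ (y ↶ z). -/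
import Mathlib


/-- Words over the alphabet X = {x₀, x₁}, encoded as lists of booleans
(`false` ↔ x₀, `true` ↔ x₁). -/
abbrev Word : Type := List Bool

/-- Noncommutative formal power series over X with real coefficients. -/
abbrev Series : Type := Word → ℝ

/-- Auxiliary recursion computing the coefficient of the shuffle product. -/
def sh : Word → Series → Series → ℝ
  | [], c, d => c [] * d []
  | a :: w, c, d => sh w (fun u => c (a :: u)) d + sh w c (fun u => d (a :: u))

/-- The shuffle product of two series. -/
def shuffle (c d : Series) : Series := fun w => sh w c d

/-- Left concatenation by the letter x₀. -/
def X0f (c : Series) : Series := fun w =>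
  match w with
  | false :: w' => c w'
  | _ => 0

/-- Left concatenation by the letter x₁. -/
def X1f (c : Series) : Series := fun w =>
  match w with
  | true :: w' => c w'
  | _ => 0

/-- The indicator series of a word. -/
def deltaW (η : Word) : Series := fun w => if w = η then 1 else 0

/-- The shuffle unit 1∅. -/
def oneS : Series := deltaW []

/-- Mixed composition product of a word with a pair of series:
∅ ∘̃ z = ∅, (x₀η) ∘̃ z = x₀(η ∘̃ z),
(x₁η) ∘̃ z = x₁(z₁ ⧢ (η ∘̃ z)) + x₀(z₂ ⧢ (η ∘̃ z)). -/
def wmix : Word → Series × Series → Series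
  | [], _ => oneS
  | false :: η, z => X0f (wmix η z)
  | true :: η, z => X1f (shuffle z.1 (wmix η z)) + X0f (shuffle z.2 (wmix η z))

/-- Mixed composition product `c ∘̃ z`, extended linearly in the left argument.
(Since `wmix η z` vanishes on words shorter than `η`, the sum may be truncated.) -/
def mixcomp (c : Series) (z : Series × Series) : Series := fun w =>
  ∑ n ∈ Finset.range (w.length + 1), ∑ f : Fin n → Bool,
    c (List.ofFn f) * wmix (List.ofFn f) z w

/-- Composition product of a word with a series:
∅ ∘ d = ∅, (x₀η) ∘ d = x₀(η ∘ d), (x₁η) ∘ d = x₀(d ⧢ (η ∘ d)). -/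
def wcomp : Word → Series → Series
  | [], _ => oneS
  | false :: η, d => X0f (wcomp η d)
  | true :: η, d => X0f (shuffle d (wcomp η d))

/-- Composition product `c ∘ d`, extended linearly in the left argument. -/
def compP (c d : Series) : Series := fun w =>
  ∑ n ∈ Finset.range (w.length + 1), ∑ f : Fin n → Bool,
    c (List.ofFn f) * wcomp (List.ofFn f) d w

/-- The group product on G: (c₁,c₂)·(d₁,d₂) = (c₁ ⧢ d₁, c₂ + c₁ ⧢ d₂). -/
def gmul (c d : Series × Series) : Series × Series :=
  (shuffle c.1 d.1, c.2 + shuffle c.1 d.2)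

/-- The identity element e = (1∅, 0) of G. -/
def geId : Series × Series := (oneS, 0)

/-- Shuffle powers. -/
def shPow (c : Series) : ℕ → Series
  | 0 => oneS
  | n + 1 => shuffle c (shPow c n)

/-- Shuffle inverse of a series with constant coefficient 1, via the
geometric series c^{⧢ -1} = Σ_k (1∅ - c)^{⧢ k} (truncated by word length,
which is exact since 1∅ - c is proper). -/
def shInv (c : Series) : Series := fun w =>
  ∑ k ∈ Finset.range (w.length + 1), shPow (oneS - c) k w

/-- The group inverse in (G,·). -/
def ginv (c : Series × Series) : Series × Series :=
  (shInv c.1, -(shuffle (shInv c.1) c.2))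

/-- The product ◁ on G, componentwise mixed composition. -/
def triOp (c d : Series × Series) : Series × Series :=
  (mixcomp c.1 d, mixcomp c.2 d)

/-- The Grossman–Larson product c ⋆ d = (c ◁ d) · d. -/
def starOp (c d : Series × Series) : Series × Series := gmul (triOp c d) d

/-- The Lie bracket on pairs: [(u₁,u₂),(v₁,v₂)] = (0, u₁ ⧢ v₂ - v₁ ⧢ u₂). -/
def bracketG (u v : Series × Series) : Series × Series :=
  (0, shuffle u.1 v.2 - shuffle v.1 u.2)

/-- η e₁ = (η, 0). -/
def e1 (η : Word) : Series × Series := (deltaW η, 0)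

/-- η e₂ = (0, η). -/
def e2 (η : Word) : Series × Series := (0, deltaW η)

/-- Post-Lie product of a word (appearing as η eᵢ) against ζ e₁ (right
argument in the e₁ component), producing the series carried in the eᵢ slot:
∅ ↶ ζe₁ = 0, (x₀η) ↶ ζe₁ = x₀(η ↶ ζe₁), (x₁η) ↶ ζe₁ = x₁(η ↶ ζe₁) + x₁(η ⧢ ζ). -/
def pw1 : Word → Series → Series
  | [], _ => 0
  | false :: η, ζ => X0f (pw1 η ζ)
  | true :: η, ζ => X1f (pw1 η ζ) + X1f (shuffle (deltaW η) ζ)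

/-- Post-Lie product against ζ e₂:
∅ ↶ ζe₂ = 0, (x₀η) ↶ ζe₂ = x₀(η ↶ ζe₂), (x₁η) ↶ ζe₂ = x₁(η ↶ ζe₂) + x₀(η ⧢ ζ). -/
def pw2 : Word → Series → Series
  | [], _ => 0
  | false :: η, ζ => X0f (pw2 η ζ)
  | true :: η, ζ => X1f (pw2 η ζ) + X0f (shuffle (deltaW η) ζ)

/-- The post-Lie product ↶ on g, bilinear extension of the word-level rules. -/
def postL (u v : Series × Series) : Series × Series :=
  (fun w => ∑ n ∈ Finset.range (w.length + 1), ∑ f : Fin n → Bool,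
      u.1 (List.ofFn f) * (pw1 (List.ofFn f) v.1 + pw2 (List.ofFn f) v.2) w,
   fun w => ∑ n ∈ Finset.range (w.length + 1), ∑ f : Fin n → Bool,
      u.2 (List.ofFn f) * (pw1 (List.ofFn f) v.1 + pw2 (List.ofFn f) v.2) w)

/-- Componentwise left concatenation by x₀. -/
def X0p (p : Series × Series) : Series × Series := (X0f p.1, X0f p.2)

/-- Componentwise left concatenation by x₁. -/
def X1p (p : Series × Series) : Series × Series := (X1f p.1, X1f p.2)

/-- The derived Lie bracket ⟦x,y⟧ = x ↶ y - y ↶ x + [x,y]. -/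
def dbr (x y : Series × Series) : Series × Series :=
  postL x y - postL y x + bracketG x y

lemma sh_add_left (w : Word) (c c' d : Series) :
    sh w (fun u => c u + c' u) d = sh w c d + sh w c' d := by
  induction w generalizing c c' d with
  | nil => simp [sh]; ring
  | cons a w ih => simp only [sh]; rw [ih, ih]; ring

lemma sh_add_right (w : Word) (c d d' : Series) :
    sh w c (fun u => d u + d' u) = sh w c d + sh w c d' := by
  induction w generalizing c d d' with
  | nil => simp [sh]; ring
  | cons a w ih => simp only [sh]; rw [ih, ih]; ring

lemma sh_smul_left (w : Word) (r : ℝ) (c d : Series) :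
    sh w (fun u => r * c u) d = r * sh w c d := by
  induction w generalizing c d with
  | nil => simp [sh]; ring
  | cons a w ih => simp only [sh]; rw [ih, ih]; ring

lemma sh_zero_left (w : Word) (d : Series) : sh w (fun _ => 0) d = 0 := by
  induction w generalizing d with
  | nil => simp [sh]
  | cons a w ih => simp only [sh]; rw [ih, ih]; ring

lemma sh_zero_right (w : Word) (c : Series) : sh w c (fun _ => 0) = 0 := by
  induction w generalizing c with
  | nil => simp [sh]
  | cons a w ih => simp only [sh]; rw [ih, ih]; ring

lemma sh_comm (w : Word) (c d : Series) : sh w c d = sh w d c := by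
  induction w generalizing c d with
  | nil => simp [sh]; ring
  | cons a w ih => simp only [sh]; rw [ih, ih (d := fun u => d (a :: u))]; ring

lemma sh_local_left (w : Word) (c c' d : Series)
    (h : ∀ u : Word, u.length ≤ w.length → c u = c' u) : sh w c d = sh w c' d := by
  induction w generalizing c c' d with
  | nil => simp only [sh]; rw [h [] (by simp)]
  | cons a w ih =>
    simp only [sh]
    rw [ih _ _ _ (fun u hu => h (a :: u) (by simpa using Nat.succ_le_succ hu)),
        ih _ _ _ (fun u hu => h u (Nat.le_succ_of_le hu))]

lemma sh_assoc (w : Word) (a b c : Series) :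
    sh w (shuffle a b) c = sh w a (shuffle b c) := by
  induction w generalizing a b c with
  | nil => simp [sh, shuffle]; ring
  | cons x w ih =>
    simp only [sh]
    have h1 : (fun v => shuffle a b (x :: v))
        = (fun v => shuffle (fun u => a (x :: u)) b v + shuffle a (fun u => b (x :: u)) v) := rfl
    have h2 : (fun v => shuffle b c (x :: v))
        = (fun v => shuffle (fun u => b (x :: u)) c v + shuffle b (fun u => c (x :: u)) v) := rfl
    rw [h1, h2, sh_add_left, sh_add_right, ih, ih, ih]
    ring

lemma shuffle_comm (a b : Series) : shuffle a b = shuffle b a := funext fun w => sh_comm w a b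
lemma shuffle_assoc (a b c : Series) : shuffle (shuffle a b) c = shuffle a (shuffle b c) :=
  funext fun w => sh_assoc w a b c

/-- Series-level version of `pw1`. -/
def d1 (ζ : Series) : Series → Word → ℝ
  | _, [] => 0
  | c, false :: w => d1 ζ (fun v => c (false :: v)) w
  | c, true :: w => d1 ζ (fun v => c (true :: v)) w + sh w (fun v => c (true :: v)) ζ

/-- Series-level version of `pw2`. -/
def d2 (ζ : Series) : Series → Word → ℝ
  | _, [] => 0
  | c, false :: w => d2 ζ (fun v => c (false :: v)) w + sh w (fun v => c (true :: v)) ζ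
  | c, true :: w => d2 ζ (fun v => c (true :: v)) w

lemma sh_smul_right (w : Word) (r : ℝ) (c d : Series) :
    sh w c (fun u => r * d u) = r * sh w c d := by
  rw [sh_comm, sh_smul_left, sh_comm]

lemma d1_add_c (ζ c c' : Series) (w : Word) :
    d1 ζ (fun u => c u + c' u) w = d1 ζ c w + d1 ζ c' w := by
  induction w generalizing c c' with
  | nil => simp [d1]
  | cons a w ih =>
    cases a
    · simp only [d1]; rw [ih]
    · simp only [d1]; rw [ih, sh_add_left]; ring

lemma d2_add_c (ζ c c' : Series) (w : Word) :
    d2 ζ (fun u => c u + c' u) w = d2 ζ c w + d2 ζ c' w := by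
  induction w generalizing c c' with
  | nil => simp [d2]
  | cons a w ih =>
    cases a
    · simp only [d2]; rw [ih, sh_add_left]; ring
    · simp only [d2]; rw [ih]

lemma d1_smul_c (ζ : Series) (r : ℝ) (c : Series) (w : Word) :
    d1 ζ (fun u => r * c u) w = r * d1 ζ c w := by
  induction w generalizing c with
  | nil => simp [d1]
  | cons a w ih =>
    cases a
    · simp only [d1]; rw [ih]
    · simp only [d1]; rw [ih, sh_smul_left]; ring

lemma d2_smul_c (ζ : Series) (r : ℝ) (c : Series) (w : Word) :
    d2 ζ (fun u => r * c u) w = r * d2 ζ c w := by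
  induction w generalizing c with
  | nil => simp [d2]
  | cons a w ih =>
    cases a
    · simp only [d2]; rw [ih, sh_smul_left]; ring
    · simp only [d2]; rw [ih]

lemma d1_zero_c (ζ : Series) (w : Word) : d1 ζ (fun _ => 0) w = 0 := by
  induction w with
  | nil => simp [d1]
  | cons a w ih =>
    cases a
    · simp only [d1]; rw [ih]
    · simp only [d1]; rw [ih, sh_zero_left]; ring

lemma d2_zero_c (ζ : Series) (w : Word) : d2 ζ (fun _ => 0) w = 0 := by
  induction w with
  | nil => simp [d2]
  | cons a w ih =>
    cases a
    · simp only [d2]; rw [ih, sh_zero_left]; ring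
    · simp only [d2]; rw [ih]

lemma d1_local (ζ c c' : Series) (w : Word)
    (h : ∀ u : Word, u.length ≤ w.length → c u = c' u) : d1 ζ c w = d1 ζ c' w := by
  induction w generalizing c c' with
  | nil => simp [d1]
  | cons a w ih =>
    cases a <;> simp only [d1]
    · exact ih _ _ (fun u hu => h (false :: u) (by simpa using Nat.succ_le_succ hu))
    · rw [ih _ _ (fun u hu => h (true :: u) (by simpa using Nat.succ_le_succ hu)),
        sh_local_left w _ _ _ (fun u hu => h (true :: u) (by simpa using Nat.succ_le_succ hu))]

lemma d2_local (ζ c c' : Series) (w : Word)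
    (h : ∀ u : Word, u.length ≤ w.length → c u = c' u) : d2 ζ c w = d2 ζ c' w := by
  induction w generalizing c c' with
  | nil => simp [d2]
  | cons a w ih =>
    cases a <;> simp only [d2]
    · rw [ih _ _ (fun u hu => h (false :: u) (by simpa using Nat.succ_le_succ hu)),
        sh_local_left w _ _ _ (fun u hu => h (true :: u) (by simpa using Nat.succ_le_succ hu))]
    · exact ih _ _ (fun u hu => h (true :: u) (by simpa using Nat.succ_le_succ hu))

lemma d1_add_z (ζ ζ' c : Series) (w : Word) :
    d1 (fun u => ζ u + ζ' u) c w = d1 ζ c w + d1 ζ' c w := by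
  induction w generalizing c with
  | nil => simp [d1]
  | cons a w ih =>
    cases a
    · simp only [d1]; rw [ih]
    · simp only [d1]; rw [ih, sh_add_right]; ring

lemma d2_add_z (ζ ζ' c : Series) (w : Word) :
    d2 (fun u => ζ u + ζ' u) c w = d2 ζ c w + d2 ζ' c w := by
  induction w generalizing c with
  | nil => simp [d2]
  | cons a w ih =>
    cases a
    · simp only [d2]; rw [ih, sh_add_right]; ring
    · simp only [d2]; rw [ih]

lemma d1_smul_z (r : ℝ) (ζ c : Series) (w : Word) :
    d1 (fun u => r * ζ u) c w = r * d1 ζ c w := by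
  induction w generalizing c with
  | nil => simp [d1]
  | cons a w ih =>
    cases a
    · simp only [d1]; rw [ih]
    · simp only [d1]; rw [ih, sh_smul_right]; ring

lemma d2_smul_z (r : ℝ) (ζ c : Series) (w : Word) :
    d2 (fun u => r * ζ u) c w = r * d2 ζ c w := by
  induction w generalizing c with
  | nil => simp [d2]
  | cons a w ih =>
    cases a
    · simp only [d2]; rw [ih, sh_smul_right]; ring
    · simp only [d2]; rw [ih]

lemma d1_zero_z (c : Series) (w : Word) : d1 (fun _ => 0) c w = 0 := by
  induction w generalizing c with
  | nil => simp [d1]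
  | cons a w ih =>
    cases a
    · simp only [d1]; rw [ih]
    · simp only [d1]; rw [ih, sh_zero_right]; ring

lemma d1_sub_z (ζ ζ' c : Series) (w : Word) :
    d1 (fun u => ζ u - ζ' u) c w = d1 ζ c w - d1 ζ' c w := by
  have h : (fun u => ζ u - ζ' u) = (fun u => ζ u + (-1 : ℝ) * ζ' u) := by funext u; ring
  rw [h, d1_add_z, d1_smul_z]; ring

lemma d2_sub_z (ζ ζ' c : Series) (w : Word) :
    d2 (fun u => ζ u - ζ' u) c w = d2 ζ c w - d2 ζ' c w := by
  have h : (fun u => ζ u - ζ' u) = (fun u => ζ u + (-1 : ℝ) * ζ' u) := by funext u; ring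
  rw [h, d2_add_z, d2_smul_z]; ring

lemma shf_comm3 (w : Word) (a b c : Series) :
    sh w (shuffle a b) c = sh w (shuffle a c) b := by
  rw [sh_assoc, sh_assoc, shuffle_comm b c]

lemma d1_der (ζ a b : Series) (w : Word) :
    d1 ζ (shuffle a b) w = shuffle (d1 ζ a) b w + shuffle a (d1 ζ b) w := by
  induction w generalizing a b with
  | nil => simp [d1, shuffle, sh]
  | cons x w ih =>
    cases x
    · have e1 : (fun v => shuffle a b (false :: v))
          = (fun v => shuffle (fun u => a (false :: u)) b v
              + shuffle a (fun u => b (false :: u)) v) := rfl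
      have e2 : (fun u => d1 ζ a (false :: u)) = d1 ζ (fun v => a (false :: v)) := rfl
      have e3 : (fun u => d1 ζ b (false :: u)) = d1 ζ (fun v => b (false :: v)) := rfl
      show d1 ζ (fun v => shuffle a b (false :: v)) w = _
      rw [e1, d1_add_c, ih, ih]
      show _ = (sh w (fun u => d1 ζ a (false :: u)) b + sh w (d1 ζ a) (fun u => b (false :: u)))
          + (sh w (fun u => a (false :: u)) (d1 ζ b) + sh w a (fun u => d1 ζ b (false :: u)))
      rw [e2, e3]
      simp only [shuffle]; ring
    · have e1 : (fun v => shuffle a b (true :: v))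
          = (fun v => shuffle (fun u => a (true :: u)) b v
              + shuffle a (fun u => b (true :: u)) v) := rfl
      have e2 : (fun u => d1 ζ a (true :: u))
          = (fun u => d1 ζ (fun v => a (true :: v)) u + shuffle (fun v => a (true :: v)) ζ u) := rfl
      have e3 : (fun u => d1 ζ b (true :: u))
          = (fun u => d1 ζ (fun v => b (true :: v)) u + shuffle (fun v => b (true :: v)) ζ u) := rfl
      show d1 ζ (fun v => shuffle a b (true :: v)) w
            + sh w (fun v => shuffle a b (true :: v)) ζ = _
      rw [e1, d1_add_c, ih, ih, sh_add_left]
      show _ = (sh w (fun u => d1 ζ a (true :: u)) b + sh w (d1 ζ a) (fun u => b (true :: u)))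
          + (sh w (fun u => a (true :: u)) (d1 ζ b) + sh w a (fun u => d1 ζ b (true :: u)))
      rw [e2, e3, sh_add_left, sh_add_right]
      have c1 : sh w (shuffle (fun u => a (true::u)) b) ζ
          = sh w (shuffle (fun u => a (true::u)) ζ) b := shf_comm3 _ _ _ _
      have c2 : sh w (shuffle a (fun u => b (true::u))) ζ
          = sh w a (shuffle (fun u => b (true::u)) ζ) := sh_assoc _ _ _ _
      simp only [shuffle] at c1 c2 ⊢
      linarith [c1, c2]

lemma d2_der (ζ a b : Series) (w : Word) :
    d2 ζ (shuffle a b) w = shuffle (d2 ζ a) b w + shuffle a (d2 ζ b) w := by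
  induction w generalizing a b with
  | nil => simp [d2, shuffle, sh]
  | cons x w ih =>
    cases x
    · have e1 : (fun v => shuffle a b (false :: v))
          = (fun v => shuffle (fun u => a (false :: u)) b v
              + shuffle a (fun u => b (false :: u)) v) := rfl
      have e1' : (fun v => shuffle a b (true :: v))
          = (fun v => shuffle (fun u => a (true :: u)) b v
              + shuffle a (fun u => b (true :: u)) v) := rfl
      have e2 : (fun u => d2 ζ a (false :: u))
          = (fun u => d2 ζ (fun v => a (false :: v)) u + shuffle (fun v => a (true :: v)) ζ u) := rfl
      have e3 : (fun u => d2 ζ b (false :: u))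
          = (fun u => d2 ζ (fun v => b (false :: v)) u + shuffle (fun v => b (true :: v)) ζ u) := rfl
      show d2 ζ (fun v => shuffle a b (false :: v)) w
            + sh w (fun v => shuffle a b (true :: v)) ζ = _
      rw [e1, e1', d2_add_c, ih, ih, sh_add_left]
      show _ = (sh w (fun u => d2 ζ a (false :: u)) b + sh w (d2 ζ a) (fun u => b (false :: u)))
          + (sh w (fun u => a (false :: u)) (d2 ζ b) + sh w a (fun u => d2 ζ b (false :: u)))
      rw [e2, e3, sh_add_left, sh_add_right]
      have c1 : sh w (shuffle (fun u => a (true::u)) b) ζ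
          = sh w (shuffle (fun u => a (true::u)) ζ) b := shf_comm3 _ _ _ _
      have c2 : sh w (shuffle a (fun u => b (true::u))) ζ
          = sh w a (shuffle (fun u => b (true::u)) ζ) := sh_assoc _ _ _ _
      simp only [shuffle] at c1 c2 ⊢
      linarith [c1, c2]
    · have e1 : (fun v => shuffle a b (true :: v))
          = (fun v => shuffle (fun u => a (true :: u)) b v
              + shuffle a (fun u => b (true :: u)) v) := rfl
      have e2 : (fun u => d2 ζ a (true :: u)) = d2 ζ (fun v => a (true :: v)) := rfl
      have e3 : (fun u => d2 ζ b (true :: u)) = d2 ζ (fun v => b (true :: v)) := rfl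
      show d2 ζ (fun v => shuffle a b (true :: v)) w = _
      rw [e1, d2_add_c, ih, ih]
      show _ = (sh w (fun u => d2 ζ a (true :: u)) b + sh w (d2 ζ a) (fun u => b (true :: u)))
          + (sh w (fun u => a (true :: u)) (d2 ζ b) + sh w a (fun u => d2 ζ b (true :: u)))
      rw [e2, e3]
      simp only [shuffle]; ring

lemma R1 (θ ζ c : Series) (w : Word) :
    d1 θ (d1 ζ c) w - d1 ζ (d1 θ c) w = d1 (d1 θ ζ) c w - d1 (d1 ζ θ) c w := by
  induction w generalizing c with
  | nil => simp [d1]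
  | cons x w ih =>
    cases x
    · exact ih (fun v => c (false :: v))
    · have e2 : (fun u => d1 ζ c (true :: u))
          = (fun u => d1 ζ (fun v => c (true :: v)) u + shuffle (fun v => c (true :: v)) ζ u) := rfl
      have e3 : (fun u => d1 θ c (true :: u))
          = (fun u => d1 θ (fun v => c (true :: v)) u + shuffle (fun v => c (true :: v)) θ u) := rfl
      show (d1 θ (fun u => d1 ζ c (true :: u)) w + sh w (fun u => d1 ζ c (true :: u)) θ)
          - (d1 ζ (fun u => d1 θ c (true :: u)) w + sh w (fun u => d1 θ c (true :: u)) ζ)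
          = (d1 (d1 θ ζ) (fun v => c (true :: v)) w + sh w (fun v => c (true :: v)) (d1 θ ζ))
          - (d1 (d1 ζ θ) (fun v => c (true :: v)) w + sh w (fun v => c (true :: v)) (d1 ζ θ))
      rw [e2, e3, d1_add_c, d1_add_c, sh_add_left, sh_add_left, d1_der, d1_der]
      have c1 : sh w (shuffle (fun v => c (true :: v)) ζ) θ
          = sh w (shuffle (fun v => c (true :: v)) θ) ζ := shf_comm3 _ _ _ _
      have hih := ih (fun v => c (true :: v))
      simp only [shuffle] at c1 hih ⊢
      linarith [c1, hih]

lemma R2 (θ ζ c : Series) (w : Word) :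
    d2 θ (d2 ζ c) w - d2 ζ (d2 θ c) w = d2 (d2 θ ζ) c w - d2 (d2 ζ θ) c w := by
  induction w generalizing c with
  | nil => simp [d2]
  | cons x w ih =>
    cases x
    · have e2 : (fun u => d2 ζ c (false :: u))
          = (fun u => d2 ζ (fun v => c (false :: v)) u + shuffle (fun v => c (true :: v)) ζ u) := rfl
      have e3 : (fun u => d2 θ c (false :: u))
          = (fun u => d2 θ (fun v => c (false :: v)) u + shuffle (fun v => c (true :: v)) θ u) := rfl
      have e4 : (fun u => d2 ζ c (true :: u)) = d2 ζ (fun v => c (true :: v)) := rfl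
      have e5 : (fun u => d2 θ c (true :: u)) = d2 θ (fun v => c (true :: v)) := rfl
      show (d2 θ (fun u => d2 ζ c (false :: u)) w + sh w (fun u => d2 ζ c (true :: u)) θ)
          - (d2 ζ (fun u => d2 θ c (false :: u)) w + sh w (fun u => d2 θ c (true :: u)) ζ)
          = (d2 (d2 θ ζ) (fun v => c (false :: v)) w + sh w (fun v => c (true :: v)) (d2 θ ζ))
          - (d2 (d2 ζ θ) (fun v => c (false :: v)) w + sh w (fun v => c (true :: v)) (d2 ζ θ))
      rw [e2, e3, e4, e5, d2_add_c, d2_add_c, d2_der, d2_der]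
      have hih := ih (fun v => c (false :: v))
      simp only [shuffle] at hih ⊢
      linarith [hih]
    · exact ih (fun v => c (true :: v))

lemma R3 (θ ζ c : Series) (w : Word) :
    d1 θ (d2 ζ c) w - d2 ζ (d1 θ c) w
      = d2 (d1 θ ζ) c w - d1 (d2 ζ θ) c w - d2 (shuffle θ ζ) c w := by
  induction w generalizing c with
  | nil => simp [d1, d2]
  | cons x w ih =>
    cases x
    · have e2 : (fun u => d2 ζ c (false :: u))
          = (fun u => d2 ζ (fun v => c (false :: v)) u + shuffle (fun v => c (true :: v)) ζ u) := rfl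
      have e3 : (fun u => d1 θ c (false :: u)) = d1 θ (fun v => c (false :: v)) := rfl
      have e4 : (fun u => d1 θ c (true :: u))
          = (fun u => d1 θ (fun v => c (true :: v)) u + shuffle (fun v => c (true :: v)) θ u) := rfl
      show (d1 θ (fun u => d2 ζ c (false :: u)) w)
          - (d2 ζ (fun u => d1 θ c (false :: u)) w + sh w (fun u => d1 θ c (true :: u)) ζ)
          = (d2 (d1 θ ζ) (fun v => c (false :: v)) w + sh w (fun v => c (true :: v)) (d1 θ ζ))
          - (d1 (d2 ζ θ) (fun v => c (false :: v)) w)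
          - (d2 (shuffle θ ζ) (fun v => c (false :: v)) w + sh w (fun v => c (true :: v)) (shuffle θ ζ))
      rw [e2, e3, e4, d1_add_c, sh_add_left, d1_der]
      have c1 : sh w (shuffle (fun v => c (true :: v)) θ) ζ
          = sh w (fun v => c (true :: v)) (shuffle θ ζ) := by
        rw [sh_assoc]
      have hih := ih (fun v => c (false :: v))
      simp only [shuffle] at c1 hih ⊢
      linarith [c1, hih]
    · have e2 : (fun u => d2 ζ c (true :: u)) = d2 ζ (fun v => c (true :: v)) := rfl
      have e4 : (fun u => d1 θ c (true :: u))
          = (fun u => d1 θ (fun v => c (true :: v)) u + shuffle (fun v => c (true :: v)) θ u) := rfl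
      show (d1 θ (fun u => d2 ζ c (true :: u)) w + sh w (fun u => d2 ζ c (true :: u)) θ)
          - (d2 ζ (fun u => d1 θ c (true :: u)) w)
          = (d2 (d1 θ ζ) (fun v => c (true :: v)) w)
          - (d1 (d2 ζ θ) (fun v => c (true :: v)) w + sh w (fun v => c (true :: v)) (d2 ζ θ))
          - (d2 (shuffle θ ζ) (fun v => c (true :: v)) w)
      rw [e2, e4, d2_add_c, d2_der]
      have hih := ih (fun v => c (true :: v))
      simp only [shuffle] at hih ⊢
      linarith [hih]

lemma delta_sum_eval (c : Series) (N : ℕ) (u : Word) (hu : u.length ≤ N) :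
    (∑ n ∈ Finset.range (N + 1), ∑ f : Fin n → Bool,
      c (List.ofFn f) • deltaW (List.ofFn f)) u = c u := by
  rw [Finset.sum_apply]
  have key : ∀ n, ((∑ f : Fin n → Bool, c (List.ofFn f) • deltaW (List.ofFn f)) u)
      = if n = u.length then c u else 0 := by
    intro n
    rw [Finset.sum_apply]
    by_cases hn : n = u.length
    · subst hn
      rw [if_pos rfl]
      rw [Finset.sum_eq_single (fun i : Fin u.length => u.get i)]
      · simp [deltaW, List.ofFn_get]
      · intro f _ hf
        have : u ≠ List.ofFn f := by
          intro h
          apply hf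
          apply List.ofFn_injective
          rw [← h, List.ofFn_get]
        simp [deltaW, this]
      · simp
    · rw [if_neg hn]
      apply Finset.sum_eq_zero
      intro f _
      have : u ≠ List.ofFn f := by
        intro h
        apply hn
        rw [h, List.length_ofFn]
      simp [deltaW, this]
  rw [Finset.sum_congr rfl (fun n _ => key n), Finset.sum_ite_eq' (Finset.range (N + 1))]
  rw [if_pos (Finset.mem_range.mpr (Nat.lt_succ_of_le hu))]

lemma lin_expand (F : Series → ℝ)
    (hadd : ∀ c c', F (c + c') = F c + F c')
    (hsmul : ∀ (r : ℝ) (c : Series), F (r • c) = r * F c) (N : ℕ)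
    (hloc : ∀ c c', (∀ u : Word, u.length ≤ N → c u = c' u) → F c = F c') (c : Series) :
    F c = ∑ n ∈ Finset.range (N + 1), ∑ f : Fin n → Bool,
      c (List.ofFn f) * F (deltaW (List.ofFn f)) := by
  have hzero : F 0 = 0 := by
    have := hsmul 0 0
    simpa using this
  let L : Series →ₗ[ℝ] ℝ :=
    { toFun := F
      map_add' := hadd
      map_smul' := fun r x => by simpa [smul_eq_mul] using hsmul r x }
  have h1 : F c = F (∑ n ∈ Finset.range (N + 1), ∑ f : Fin n → Bool,
      c (List.ofFn f) • deltaW (List.ofFn f)) := by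
    apply hloc
    intro u hu
    rw [delta_sum_eval c N u hu]
  rw [h1]
  have h2 : L (∑ n ∈ Finset.range (N + 1), ∑ f : Fin n → Bool,
      c (List.ofFn f) • deltaW (List.ofFn f))
      = ∑ n ∈ Finset.range (N + 1), ∑ f : Fin n → Bool,
        c (List.ofFn f) * F (deltaW (List.ofFn f)) := by
    rw [map_sum]
    refine Finset.sum_congr rfl (fun n _ => ?_)
    rw [map_sum]
    refine Finset.sum_congr rfl (fun f _ => ?_)
    simp [L, smul_eq_mul]
  exact h2











lemma delta_cons_same (a : Bool) (η : Word) :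
    (fun v => deltaW (a :: η) (a :: v)) = deltaW η := by
  funext v; simp [deltaW]

lemma delta_cons_diff (a b : Bool) (η : Word) (h : a ≠ b) :
    (fun v => deltaW (a :: η) (b :: v)) = (fun _ => 0) := by
  funext v; simp [deltaW, h.symm]

lemma delta_nil_cons (a : Bool) : (fun v : Word => deltaW [] (a :: v)) = (fun _ => 0) := by
  funext v; simp [deltaW]

lemma d1_delta (η : Word) (ζ : Series) (w : Word) : d1 ζ (deltaW η) w = pw1 η ζ w := by
  induction η generalizing w with
  | nil =>
    simp only [pw1]
    induction w with
    | nil => simp [d1]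
    | cons a w ihw =>
      cases a
      · show d1 ζ (fun v => deltaW [] (false :: v)) w = _
        rw [delta_nil_cons, d1_zero_c]; rfl
      · show d1 ζ (fun v => deltaW [] (true :: v)) w
            + sh w (fun v => deltaW [] (true :: v)) ζ = _
        rw [delta_nil_cons, d1_zero_c, sh_zero_left]; simp
  | cons a η ih =>
    cases a
    · cases w with
      | nil => simp [d1, pw1, X0f]
      | cons b w =>
        cases b
        · show d1 ζ (fun v => deltaW (false :: η) (false :: v)) w = _
          rw [delta_cons_same]
          simpa [pw1, X0f] using ih w
        · show d1 ζ (fun v => deltaW (false :: η) (true :: v)) w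
              + sh w (fun v => deltaW (false :: η) (true :: v)) ζ = _
          rw [delta_cons_diff false true η (by simp), d1_zero_c, sh_zero_left]
          simp [pw1, X0f]
    · cases w with
      | nil => simp [d1, pw1, X1f]
      | cons b w =>
        cases b
        · show d1 ζ (fun v => deltaW (true :: η) (false :: v)) w = _
          rw [delta_cons_diff true false η (by simp), d1_zero_c]
          simp [pw1, X1f]
        · show d1 ζ (fun v => deltaW (true :: η) (true :: v)) w
              + sh w (fun v => deltaW (true :: η) (true :: v)) ζ = _
          rw [delta_cons_same]
          have : sh w (deltaW η) ζ = shuffle (deltaW η) ζ w := rfl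
          rw [ih w, this]
          simp [pw1, X1f]

lemma d2_delta (η : Word) (ζ : Series) (w : Word) : d2 ζ (deltaW η) w = pw2 η ζ w := by
  induction η generalizing w with
  | nil =>
    simp only [pw2]
    induction w with
    | nil => simp [d2]
    | cons a w ihw =>
      cases a
      · show d2 ζ (fun v => deltaW [] (false :: v)) w
            + sh w (fun v => deltaW [] (true :: v)) ζ = _
        rw [delta_nil_cons, delta_nil_cons, d2_zero_c, sh_zero_left]; simp
      · show d2 ζ (fun v => deltaW [] (true :: v)) w = _
        rw [delta_nil_cons, d2_zero_c]; rfl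
  | cons a η ih =>
    cases a
    · cases w with
      | nil => simp [d2, pw2, X0f]
      | cons b w =>
        cases b
        · show d2 ζ (fun v => deltaW (false :: η) (false :: v)) w
              + sh w (fun v => deltaW (false :: η) (true :: v)) ζ = _
          rw [delta_cons_same, delta_cons_diff false true η (by simp), sh_zero_left]
          simpa [pw2, X0f] using ih w
        · show d2 ζ (fun v => deltaW (false :: η) (true :: v)) w = _
          rw [delta_cons_diff false true η (by simp), d2_zero_c]
          simp [pw2, X0f]
    · cases w with
      | nil => simp [d2, pw2, X1f, X0f]
      | cons b w =>
        cases b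
        · show d2 ζ (fun v => deltaW (true :: η) (false :: v)) w
              + sh w (fun v => deltaW (true :: η) (true :: v)) ζ = _
          rw [delta_cons_diff true false η (by simp), d2_zero_c, delta_cons_same]
          have : sh w (deltaW η) ζ = shuffle (deltaW η) ζ w := rfl
          rw [this]
          simp [pw2, X1f, X0f]
        · show d2 ζ (fun v => deltaW (true :: η) (true :: v)) w = _
          rw [delta_cons_same]
          simpa [pw2, X1f, X0f] using ih w

lemma d2_zero_z (c : Series) (w : Word) : d2 (fun _ => 0) c w = 0 := by
  induction w generalizing c with
  | nil => simp [d2]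
  | cons a w ih =>
    cases a
    · simp only [d2]; rw [ih, sh_zero_right]; ring
    · simp only [d2]; rw [ih]

lemma d1_sub_c (ζ c c' : Series) (w : Word) :
    d1 ζ (fun u => c u - c' u) w = d1 ζ c w - d1 ζ c' w := by
  have h : (fun u => c u - c' u) = (fun u => c u + (-1 : ℝ) * c' u) := by funext u; ring
  rw [h, d1_add_c, d1_smul_c]; ring

lemma d2_sub_c (ζ c c' : Series) (w : Word) :
    d2 ζ (fun u => c u - c' u) w = d2 ζ c w - d2 ζ c' w := by
  have h : (fun u => c u - c' u) = (fun u => c u + (-1 : ℝ) * c' u) := by funext u; ring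
  rw [h, d2_add_c, d2_smul_c]; ring

lemma postL_comp (ζ1 ζ2 c : Series) (w : Word) :
    (∑ n ∈ Finset.range (w.length + 1), ∑ f : Fin n → Bool,
      c (List.ofFn f) * (pw1 (List.ofFn f) ζ1 + pw2 (List.ofFn f) ζ2) w)
    = d1 ζ1 c w + d2 ζ2 c w := by
  have h := lin_expand (fun c => d1 ζ1 c w + d2 ζ2 c w)
    (fun c c' => by
      show d1 ζ1 (fun u => c u + c' u) w + d2 ζ2 (fun u => c u + c' u) w = _
      rw [d1_add_c, d2_add_c]; ring)
    (fun r c => by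
      show d1 ζ1 (fun u => r * c u) w + d2 ζ2 (fun u => r * c u) w = _
      rw [d1_smul_c, d2_smul_c]; ring)
    w.length
    (fun c c' hcc => by
      show d1 ζ1 c w + d2 ζ2 c w = d1 ζ1 c' w + d2 ζ2 c' w
      rw [d1_local ζ1 c c' w hcc, d2_local ζ2 c c' w hcc])
    c
  rw [h]
  refine Finset.sum_congr rfl fun n _ => Finset.sum_congr rfl fun f _ => ?_
  rw [d1_delta, d2_delta]
  simp

lemma postL_eq (u v : Series × Series) :
    postL u v = (fun w => d1 v.1 u.1 w + d2 v.2 u.1 w,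
                 fun w => d1 v.1 u.2 w + d2 v.2 u.2 w) := by
  refine Prod.ext ?_ ?_ <;> funext w
  · exact postL_comp v.1 v.2 u.1 w
  · exact postL_comp v.1 v.2 u.2 w

lemma main1 (z1 z2 x1 x2 y1 y2 : Series) (w : Word) :
    d1 z1 (fun u => shuffle x1 y2 u - shuffle y1 x2 u) w
      + d2 z2 (fun u => shuffle x1 y2 u - shuffle y1 x2 u) w
    = (shuffle (fun u => d1 z1 x1 u + d2 z2 x1 u) y2 w
        - shuffle y1 (fun u => d1 z1 x2 u + d2 z2 x2 u) w)
      + (shuffle x1 (fun u => d1 z1 y2 u + d2 z2 y2 u) w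
        - shuffle (fun u => d1 z1 y1 u + d2 z2 y1 u) x2 w) := by
  rw [d1_sub_c, d2_sub_c, d1_der, d1_der, d2_der, d2_der]
  simp only [shuffle]
  rw [sh_add_left, sh_add_left, sh_add_right, sh_add_right]
  ring

lemma main2 (x1 x2 y1 y2 c : Series) (w : Word) :
    d1 (fun _ => 0) c w + d2 (fun u => shuffle x1 y2 u - shuffle y1 x2 u) c w
    = ((d1 y1 (fun u => d1 x1 c u + d2 x2 c u) w + d2 y2 (fun u => d1 x1 c u + d2 x2 c u) w)
        - (d1 (fun u => d1 y1 x1 u + d2 y2 x1 u) c w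
            + d2 (fun u => d1 y1 x2 u + d2 y2 x2 u) c w))
      - ((d1 x1 (fun u => d1 y1 c u + d2 y2 c u) w + d2 x2 (fun u => d1 y1 c u + d2 y2 c u) w)
        - (d1 (fun u => d1 x1 y1 u + d2 x2 y1 u) c w
            + d2 (fun u => d1 x1 y2 u + d2 x2 y2 u) c w)) := by
  rw [d1_zero_z, d2_sub_z, d1_add_c, d2_add_c, d1_add_c, d2_add_c,
      d1_add_z, d2_add_z, d1_add_z, d2_add_z]
  have h1 := R1 y1 x1 c w
  have h2 := R2 y2 x2 c w
  have h3 := R3 y1 x2 c w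
  have h4 := R3 x1 y2 c w
  linarith [h1, h2, h3, h4]

lemma d1_zero_c' (ζ : Series) (w : Word) : d1 ζ (0 : Series) w = 0 := d1_zero_c ζ w
lemma d2_zero_c' (ζ : Series) (w : Word) : d2 ζ (0 : Series) w = 0 := d2_zero_c ζ w
lemma d1_zero_z' (c : Series) (w : Word) : d1 (0 : Series) c w = 0 := d1_zero_z c w
lemma d2_zero_z' (c : Series) (w : Word) : d2 (0 : Series) c w = 0 := d2_zero_z c w
lemma pw1_zero (η : Word) (w : Word) : pw1 η (0 : Series) w = 0 := by
  rw [← d1_delta]; exact d1_zero_z' _ _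
lemma pw2_zero (η : Word) (w : Word) : pw2 η (0 : Series) w = 0 := by
  rw [← d2_delta]; exact d2_zero_z' _ _

lemma shuffle_zero (c : Series) (w : Word) : shuffle c (0 : Series) w = 0 := sh_zero_right w c

lemma main1' (z1 z2 x1 x2 y1 y2 : Series) (w : Word) :
    d1 z1 (shuffle x1 y2 - shuffle y1 x2) w + d2 z2 (shuffle x1 y2 - shuffle y1 x2) w
    = (shuffle (fun u => d1 z1 x1 u + d2 z2 x1 u) y2 w
        - shuffle y1 (fun u => d1 z1 x2 u + d2 z2 x2 u) w)
      + (shuffle x1 (fun u => d1 z1 y2 u + d2 z2 y2 u) w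
        - shuffle (fun u => d1 z1 y1 u + d2 z2 y1 u) x2 w) := main1 z1 z2 x1 x2 y1 y2 w

lemma main2' (x1 x2 y1 y2 c : Series) (w : Word) :
    d1 (0 : Series) c w + d2 (shuffle x1 y2 - shuffle y1 x2) c w
    = ((d1 y1 (fun u => d1 x1 c u + d2 x2 c u) w + d2 y2 (fun u => d1 x1 c u + d2 x2 c u) w)
        - (d1 (fun u => d1 y1 x1 u + d2 y2 x1 u) c w
            + d2 (fun u => d1 y1 x2 u + d2 y2 x2 u) c w))
      - ((d1 x1 (fun u => d1 y1 c u + d2 y2 c u) w + d2 x2 (fun u => d1 y1 c u + d2 y2 c u) w)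
        - (d1 (fun u => d1 x1 y1 u + d2 x2 y1 u) c w
            + d2 (fun u => d1 x1 y2 u + d2 x2 y2 u) c w)) := main2 x1 x2 y1 y2 c w


/-- the bilinear product ↶ defined by the inductive rules
(∅eᵢ ↶ ζe_j = 0, (x₀η)eᵢ ↶ ζe_j = x₀(ηeᵢ ↶ ζe_j),
(x₁η)eᵢ ↶ ζe₁ = x₁(ηeᵢ ↶ ζe₁) + x₁(η ⧢ ζ)eᵢ,
(x₁η)eᵢ ↶ ζe₂ = x₁(ηeᵢ ↶ ζe₂) + x₀(η ⧢ ζ)eᵢ) together with the bracket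
[(u₁,u₂),(v₁,v₂)] = (0, u₁ ⧢ v₂ - v₁ ⧢ u₂) makes (g, [-,-], ↶) a (right)
post-Lie algebra. -/
theorem postL_postLie :
    (∀ v : Series × Series, postL (e1 []) v = 0 ∧ postL (e2 []) v = 0) ∧
    (∀ (η : Word) (v : Series × Series),
      postL (e1 (false :: η)) v = X0p (postL (e1 η) v) ∧
      postL (e2 (false :: η)) v = X0p (postL (e2 η) v)) ∧
    (∀ η ζ : Word,
      postL (e1 (true :: η)) (e1 ζ)
        = X1p (postL (e1 η) (e1 ζ)) + (X1f (shuffle (deltaW η) (deltaW ζ)), 0) ∧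
      postL (e2 (true :: η)) (e1 ζ)
        = X1p (postL (e2 η) (e1 ζ)) + (0, X1f (shuffle (deltaW η) (deltaW ζ))) ∧
      postL (e1 (true :: η)) (e2 ζ)
        = X1p (postL (e1 η) (e2 ζ)) + (X0f (shuffle (deltaW η) (deltaW ζ)), 0) ∧
      postL (e2 (true :: η)) (e2 ζ)
        = X1p (postL (e2 η) (e2 ζ)) + (0, X0f (shuffle (deltaW η) (deltaW ζ)))) ∧
    (∀ x y z : Series × Series, x.1 [] = 0 → y.1 [] = 0 → z.1 [] = 0 →
      postL (bracketG x y) z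
        = bracketG (postL x z) y + bracketG x (postL y z) ∧
      postL z (bracketG x y)
        = (postL (postL z x) y - postL z (postL x y))
          - (postL (postL z y) x - postL z (postL y x))) := by
  refine ⟨?_, ?_, ?_, ?_⟩
  · intro v
    constructor <;>
    · rw [postL_eq]
      refine Prod.ext ?_ ?_ <;> funext w <;>
        simp [e1, e2, d1_delta, d2_delta, pw1, pw2, d1_zero_c', d2_zero_c']
  · intro η v
    constructor <;>
    · rw [postL_eq, postL_eq]
      refine Prod.ext ?_ ?_ <;> funext w <;>
        rcases w with _ | ⟨_ | _, w⟩ <;>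
        simp [e1, e2, X0p, X0f, d1_delta, d2_delta, pw1, pw2, d1_zero_c', d2_zero_c']
  · intro η ζ
    refine ⟨?_, ?_, ?_, ?_⟩ <;>
    · rw [postL_eq, postL_eq]
      refine Prod.ext ?_ ?_ <;> funext w <;>
        rcases w with _ | ⟨_ | _, w⟩ <;>
        simp [e1, e2, X1p, X0f, X1f, d1_delta, d2_delta, pw1, pw2,
          d1_zero_c', d2_zero_c', d1_zero_z', d2_zero_z', pw1_zero, pw2_zero, shuffle_zero]
  · intro x y z _ _ _
    constructor
    · simp only [postL_eq, bracketG]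
      refine Prod.ext ?_ ?_ <;> funext w
      · simp [d1_zero_c', d2_zero_c']
      · have h := main1' z.1 z.2 x.1 x.2 y.1 y.2 w
        simp only [Pi.sub_apply, Pi.add_apply, Prod.fst_add, Prod.snd_add]
        linarith [h]
    · simp only [postL_eq, bracketG]
      refine Prod.ext ?_ ?_ <;> funext w
      · have h := main2' x.1 x.2 y.1 y.2 z.1 w
        simp only [Prod.fst_sub, Prod.snd_sub, Pi.sub_apply]
        linarith [h]
      · have h := main2' x.1 x.2 y.1 y.2 z.2 w
        simp only [Prod.fst_sub, Prod.snd_sub, Pi.sub_apply]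
        linarith [h]
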